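/- Let R be a principal ideal domain and g ≥ 1. Then the symplectic group Sp_{2g}(R) acts transitively on the set of unimodular vectors of R^{2g}: for any two vectors v, w ∈ R^{2g} each of whose coordinates generate the unit ideal of R, there exists A ∈ Sp_{2g}(R) with A(v) = w. -/

import Mathlib

/-!
If `f v = 1` for a linear form `f`, perfectness of an alternating form `B` gives `u` with
`B v u = 1`, and `M` splits as the hyperbolic plane `R v ⊕ R u` plus its `B`-orthogonal `W`. Over a
PID the submodule `W` is again free, of rank two less, and `B` stays alternating and perfect on it;
by induction on the rank, `M` has a symplectic basis, i.e. an isometry onto `(Rⁿ, omegaH)`, and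
one may take `v` to be its first vector. For two unimodular `v, w ∈ R^{2g}` the two isometries that
send `v` and `w` to the first standard basis vector compose to the required `A`.
-/

/-- The standard symplectic form on `R^n` (interleaved hyperbolic pairs), i.e. the form of the
hyperbolic formed space `H^{⊕ g}` when `n = 2g`. -/
def omegaH (R : Type) [CommRing R] (n : ℕ) (x y : Fin n → R) : R :=
  ∑ i : Fin n, ∑ j : Fin n, (if (i : ℕ) % 2 = 0 ∧ (j : ℕ) = (i : ℕ) + 1 then x i * y j
    else if (j : ℕ) % 2 = 0 ∧ (i : ℕ) = (j : ℕ) + 1 then -(x i * y j) else 0)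

section StandardForm

open Matrix

variable {R : Type} [CommRing R]

/-- The Gram matrix of `omegaH`, indexed by `ℕ` so that adjoining a hyperbolic pair in front is
the shift `omegaHCoeff_add_two`. -/
def omegaHCoeff (R : Type) [CommRing R] (i j : ℕ) : R :=
  if i % 2 = 0 ∧ j = i + 1 then 1 else if j % 2 = 0 ∧ i = j + 1 then -1 else 0

lemma omegaH_eq_sum_omegaHCoeff {n : ℕ} (x y : Fin n → R) :
    omegaH R n x y = ∑ i : Fin n, ∑ j : Fin n, omegaHCoeff R i j * x i * y j := by
  unfold omegaH omegaHCoeff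
  refine Finset.sum_congr rfl fun i _ => Finset.sum_congr rfl fun j _ => ?_
  split_ifs <;> ring

@[simp] lemma omegaHCoeff_add_two (i j : ℕ) :
    omegaHCoeff R (i + 2) (j + 2) = omegaHCoeff R i j := by
  unfold omegaHCoeff
  refine if_congr (by omega) rfl (if_congr (by omega) rfl rfl)

lemma omegaH_vecCons_vecCons {n : ℕ} (a b a' b' : R) (z z' : Fin n → R) :
    omegaH R (n + 2) (vecCons a (vecCons b z)) (vecCons a' (vecCons b' z')) =
      a * b' - b * a' + omegaH R n z z' := by
  simp only [omegaH_eq_sum_omegaHCoeff, Fin.sum_univ_succ, Fin.val_succ, omegaHCoeff_add_two,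
    cons_val_zero, cons_val_succ]
  simp [omegaHCoeff]
  ring

lemma eq_vecCons_vecCons {α : Type*} {n : ℕ} (x : Fin (n + 2) → α) :
    x = vecCons (x 0) (vecCons (x 1) fun i => x i.succ.succ) := by
  rw [← cons_head_tail x, ← cons_head_tail (vecTail x)]
  rfl

lemma omegaH_self {n : ℕ} (x : Fin n → R) : omegaH R n x x = 0 := by
  induction n using Nat.twoStepInduction with
  | zero => simp [omegaH]
  | one => simp [omegaH]
  | more n ih _ =>
    rw [eq_vecCons_vecCons x, omegaH_vecCons_vecCons, ih]
    ring

lemma exists_omegaH_eq_dotProduct (g : ℕ) (c : Fin (2 * g) → R) :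
    ∃ y, ∀ x, omegaH R (2 * g) y x = c ⬝ᵥ x := by
  induction g with
  | zero => exact ⟨0, fun x => by simp [omegaH]⟩
  | succ g ih =>
    change Fin (2 * g + 2) → R at c
    obtain ⟨y, hy⟩ := ih fun i => c i.succ.succ
    refine ⟨vecCons (c 1) (vecCons (-c 0) y), fun x => ?_⟩
    change Fin (2 * g + 2) → R at x
    change omegaH R (2 * g + 2) _ x = c ⬝ᵥ x
    conv_lhs => rw [eq_vecCons_vecCons x, omegaH_vecCons_vecCons, hy]
    conv_rhs => rw [eq_vecCons_vecCons c, eq_vecCons_vecCons x, cons_dotProduct_cons,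
      cons_dotProduct_cons]
    ring

def omegaHForm (R : Type) [CommRing R] (n : ℕ) : (Fin n → R) →ₗ[R] (Fin n → R) →ₗ[R] R :=
  Matrix.toLinearMap₂' R (Matrix.of fun i j : Fin n => omegaHCoeff R i j)

@[simp] lemma omegaHForm_apply {n : ℕ} (x y : Fin n → R) :
    omegaHForm R n x y = omegaH R n x y := by
  rw [omegaHForm, Matrix.toLinearMap₂'_apply, omegaH_eq_sum_omegaHCoeff]
  simp only [smul_eq_mul, Matrix.of_apply]
  exact Finset.sum_congr rfl fun i _ => Finset.sum_congr rfl fun j _ => by ring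

lemma omegaHForm_isAlt (n : ℕ) : (omegaHForm R n).IsAlt := fun x => by
  rw [omegaHForm_apply, omegaH_self]

lemma omegaHForm_surjective (g : ℕ) : Function.Surjective (omegaHForm R (2 * g)) := fun φ => by
  obtain ⟨y, hy⟩ := exists_omegaH_eq_dotProduct g fun i => φ (Pi.single i 1)
  refine ⟨y, LinearMap.pi_ext' fun i => LinearMap.ext_ring ?_⟩
  simp [hy]

end StandardForm

namespace LinearMap.IsAlt

variable {R M : Type} [CommRing R] [AddCommGroup M] [Module R M]

def orthogonalPair (B : M →ₗ[R] M →ₗ[R] R) (v u : M) : Submodule R M :=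
  LinearMap.ker (B v) ⊓ LinearMap.ker (B u)

@[simp] lemma mem_orthogonalPair {B : M →ₗ[R] M →ₗ[R] R} {v u x : M} :
    x ∈ orthogonalPair B v u ↔ B v x = 0 ∧ B u x = 0 :=
  Iff.rfl

variable {B : M →ₗ[R] M →ₗ[R] R} (hB : B.IsAlt)

section HyperbolicPair

variable {v u : M} (hvu : B v u = 1)

include hB hvu in
lemma sub_smul_sub_smul_mem_orthogonalPair (x : M) :
    x - B x u • v - B v x • u ∈ orthogonalPair B v u := by
  have huv : B u v = -1 := by rw [← hB.neg, hvu]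
  have hxu : B x u = -B u x := (hB.neg u x).symm
  refine mem_orthogonalPair.2 ⟨?_, ?_⟩ <;>
    simp only [map_sub, map_smul, smul_eq_mul, hB v, hB u, hvu, huv, hxu] <;> ring

def hyperbolicSplitting : M ≃ₗ[R] R × R × orthogonalPair B v u where
  toFun x := (B x u, B v x, ⟨_, sub_smul_sub_smul_mem_orthogonalPair hB hvu x⟩)
  map_add' x y := by
    ext <;> simp only [map_add, LinearMap.add_apply, Prod.fst_add, Prod.snd_add,
      Submodule.coe_add, add_smul]
    abel
  map_smul' r x := by
    ext <;> simp only [map_smul, LinearMap.smul_apply, smul_eq_mul, Prod.smul_fst, Prod.smul_snd,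
      Submodule.coe_smul, RingHom.id_apply, smul_sub, mul_smul]
  invFun p := p.1 • v + p.2.1 • u + p.2.2
  left_inv x := by simp
  right_inv := by
    rintro ⟨a, b, w, hw⟩
    obtain ⟨hvw, huw⟩ := mem_orthogonalPair.1 hw
    have hwu : B w u = 0 := by rw [← hB.neg, huw, neg_zero]
    ext
    · simp [hB u, hvu, hwu]
    · simp [hB v, hvu, hvw]
    · simp [hB v, hB u, hvu, hvw, hwu]
      abel

lemma hyperbolicSplitting_symm_apply (p : R × R × orthogonalPair B v u) :
    (hB.hyperbolicSplitting hvu).symm p = p.1 • v + p.2.1 • u + p.2.2 :=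
  rfl

lemma hyperbolicSplitting_apply_self : hB.hyperbolicSplitting hvu v = (1, 0, 0) := by
  rw [← LinearEquiv.eq_symm_apply, hyperbolicSplitting_symm_apply]
  simp

lemma hyperbolicSplitting_apply_coe (w : orthogonalPair B v u) :
    hB.hyperbolicSplitting hvu w = (0, 0, w) := by
  rw [← LinearEquiv.eq_symm_apply, hyperbolicSplitting_symm_apply]
  simp

lemma apply_hyperbolicSplitting_symm (p q : R × R × orthogonalPair B v u) :
    B ((hB.hyperbolicSplitting hvu).symm p) ((hB.hyperbolicSplitting hvu).symm q) =
      p.1 * q.2.1 - p.2.1 * q.1 + B p.2.2 q.2.2 := by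
  obtain ⟨a, b, w, hw⟩ := p
  obtain ⟨a', b', w', hw'⟩ := q
  obtain ⟨hvw, huw⟩ := mem_orthogonalPair.1 hw
  obtain ⟨hvw', huw'⟩ := mem_orthogonalPair.1 hw'
  have huv : B u v = -1 := by rw [← hB.neg, hvu]
  have hwv : B w v = 0 := by rw [← hB.neg, hvw, neg_zero]
  have hwu : B w u = 0 := by rw [← hB.neg, huw, neg_zero]
  simp [hyperbolicSplitting_symm_apply, hB v, hB u, hvu, huv, hvw', huw', hwv, hwu]
  ring

include hB hvu in
lemma surjective_domRestrict₁₂_orthogonalPair (hBs : Function.Surjective B) :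
    Function.Surjective (B.domRestrict₁₂ (orthogonalPair B v u) (orthogonalPair B v u)) := by
  intro φ
  let π := LinearMap.snd R R _ ∘ₗ LinearMap.snd R R _ ∘ₗ (hB.hyperbolicSplitting hvu).toLinearMap
  obtain ⟨y, hy⟩ := hBs (φ ∘ₗ π)
  refine ⟨π y, LinearMap.ext fun w => ?_⟩
  have key := hB.apply_hyperbolicSplitting_symm hvu (hB.hyperbolicSplitting hvu y) (0, 0, w)
  rw [LinearEquiv.symm_apply_apply, ← hB.hyperbolicSplitting_apply_coe hvu,
    LinearEquiv.symm_apply_apply, hy] at key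
  show B (π y) w = φ w
  simpa [π, hB.hyperbolicSplitting_apply_coe hvu] using key.symm

include hB hvu in
lemma exists_omegaH_equiv_of_orthogonalPair {m : ℕ}
    (eW : orthogonalPair B v u ≃ₗ[R] (Fin m → R))
    (heW : ∀ w w', omegaH R m (eW w) (eW w') = B w w') :
    ∃ e : M ≃ₗ[R] (Fin (m + 2) → R),
      (∀ x y, omegaH R (m + 2) (e x) (e y) = B x y) ∧ e v = Pi.single 0 1 := by
  let cons₂ : (R × R × (Fin m → R)) ≃ₗ[R] (Fin (m + 2) → R) :=
    ((LinearEquiv.refl R R).prodCongr (Fin.consLinearEquiv R (n := m) fun _ => R)).trans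
      (Fin.consLinearEquiv R (n := m + 1) fun _ => R)
  let e := (hB.hyperbolicSplitting hvu).trans
    (((LinearEquiv.refl R R).prodCongr ((LinearEquiv.refl R R).prodCongr eW)).trans cons₂)
  have he : ∀ p, e ((hB.hyperbolicSplitting hvu).symm p) =
      Matrix.vecCons p.1 (Matrix.vecCons p.2.1 (eW p.2.2)) :=
    fun p => by simp [e, cons₂]; rfl
  refine ⟨e, fun x y => ?_, ?_⟩
  · obtain ⟨p, rfl⟩ := (hB.hyperbolicSplitting hvu).symm.surjective x
    obtain ⟨q, rfl⟩ := (hB.hyperbolicSplitting hvu).symm.surjective y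
    rw [he, he, omegaH_vecCons_vecCons, heW, hB.apply_hyperbolicSplitting_symm hvu]
  · rw [← (hB.hyperbolicSplitting hvu).symm_apply_apply v, hB.hyperbolicSplitting_apply_self, he]
    ext i
    refine Fin.cases ?_ (fun j => ?_) i <;> simp

end HyperbolicPair

variable [IsDomain R] [IsPrincipalIdealRing R] [Module.Free R M] [Module.Finite R M]
  (hBs : Function.Surjective B)

include hB hBs in
lemma exists_omegaH_equiv_apply_eq_single_of_forall_finrank_lt
    (ih : ∀ (N : Type) [AddCommGroup N] [Module R N] [Module.Free R N] [Module.Finite R N],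
      Module.finrank R N < Module.finrank R M → ∀ B' : N →ₗ[R] N →ₗ[R] R, B'.IsAlt →
        Function.Surjective B' → ∃ e : N ≃ₗ[R] (Fin (Module.finrank R N) → R),
          ∀ x y, omegaH R _ (e x) (e y) = B' x y)
    {v : M} {f : M →ₗ[R] R} (hfv : f v = 1) :
    ∃ (m : ℕ) (e : M ≃ₗ[R] (Fin (m + 2) → R)),
      (∀ x y, omegaH R (m + 2) (e x) (e y) = B x y) ∧ e v = Pi.single 0 1 := by
  obtain ⟨y, hy⟩ := hBs f
  have hvu : B v (-y) = 1 := by rw [map_neg, hB.neg, hy, hfv]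
  have hrank := (hB.hyperbolicSplitting hvu).finrank_eq
  simp only [Module.finrank_prod, Module.finrank_self] at hrank
  obtain ⟨eW, heW⟩ := ih (orthogonalPair B v (-y)) (by omega) _ (fun w => hB w)
    (hB.surjective_domRestrict₁₂_orthogonalPair hvu hBs)
  exact ⟨_, hB.exists_omegaH_equiv_of_orthogonalPair hvu eW heW⟩

include hB hBs in
theorem exists_omegaH_equiv :
    ∃ e : M ≃ₗ[R] (Fin (Module.finrank R M) → R), ∀ x y, omegaH R _ (e x) (e y) = B x y := by
  induction hn : Module.finrank R M using Nat.strong_induction_on generalizing M with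
  | _ n ih =>
  rcases n.eq_zero_or_pos with rfl | hpos
  · have := (Module.finrank_eq_zero_iff_of_free R M).1 hn
    exact ⟨LinearEquiv.ofSubsingleton _ _, fun x y => by simp [omegaH, Subsingleton.elim x 0]⟩
  · let b := Module.finBasis R M
    let i : Fin (Module.finrank R M) := ⟨0, hn ▸ hpos⟩
    obtain ⟨m, e, he, -⟩ := hB.exists_omegaH_equiv_apply_eq_single_of_forall_finrank_lt hBs
      (fun N _ _ _ _ hN B' hB' hB's => ih _ (hn ▸ hN) hB' hB's rfl)
      (by simp : b.coord i (b i) = 1)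
    obtain rfl : n = m + 2 := by simpa [← hn] using e.finrank_eq
    exact ⟨e, he⟩

include hB hBs in
theorem exists_omegaH_equiv_apply_eq_single {v : M} {f : M →ₗ[R] R} (hfv : f v = 1) :
    ∃ (m : ℕ) (e : M ≃ₗ[R] (Fin (m + 2) → R)),
      (∀ x y, omegaH R (m + 2) (e x) (e y) = B x y) ∧ e v = Pi.single 0 1 :=
  hB.exists_omegaH_equiv_apply_eq_single_of_forall_finrank_lt hBs
    (fun _ _ _ _ _ _ _ hB' hB's => hB'.exists_omegaH_equiv hB's) hfv

end LinearMap.IsAlt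

lemma exists_linearMap_apply_eq_one_of_span_range_eq_top {ι R : Type} [CommRing R] [Fintype ι]
    {v : ι → R} (hv : Ideal.span (Set.range v) = ⊤) : ∃ f : (ι → R) →ₗ[R] R, f v = 1 := by
  obtain ⟨c, hc⟩ := Ideal.mem_span_range_iff_exists_fun.1 (hv ▸ Submodule.mem_top : (1 : R) ∈ _)
  exact ⟨∑ i, c i • LinearMap.proj i, by simpa using hc⟩

theorem Sp_transitive_unimodular
    (R : Type) [CommRing R] [IsDomain R] [IsPrincipalIdealRing R]
    (g : ℕ) (v w : Fin (2 * g) → R)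
    (hv : Ideal.span (Set.range v) = ⊤) (hw : Ideal.span (Set.range w) = ⊤) :
    ∃ A : (Fin (2 * g) → R) ≃ₗ[R] (Fin (2 * g) → R),
      (∀ x y, omegaH R (2 * g) (A x) (A y) = omegaH R (2 * g) x y) ∧ A v = w := by
  have hB := omegaHForm_isAlt (R := R) (2 * g)
  have hBs := omegaHForm_surjective (R := R) g
  obtain ⟨fv, hfv⟩ := exists_linearMap_apply_eq_one_of_span_range_eq_top hv
  obtain ⟨fw, hfw⟩ := exists_linearMap_apply_eq_one_of_span_range_eq_top hw
  obtain ⟨m, ev, hev, hev₀⟩ := hB.exists_omegaH_equiv_apply_eq_single hBs hfv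
  obtain ⟨m', ew, hew, hew₀⟩ := hB.exists_omegaH_equiv_apply_eq_single hBs hfw
  obtain rfl : m = m' := by simpa using ev.finrank_eq.symm.trans ew.finrank_eq
  refine ⟨ev.trans ew.symm, fun x y => ?_, ?_⟩
  · rw [← omegaHForm_apply, ← hew, ← omegaHForm_apply x, ← hev]
    simp
  · rw [LinearEquiv.trans_apply, hev₀, ← hew₀, LinearEquiv.symm_apply_apply]
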